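/- Let $V=[n]$ with $n \ge ra$, $r > k \ge 1$, $a \ge 3$, and $0 \le i \le (\lfloor n/(a-1) \rfloor - k)/2$. Let $\mathcal{T} = \{T_1, \ldots, T_{a-1}\}$ be a family of $(k+2i)$-element subsets of $V$ with $S := T_1 \cap T_2 \ne \emptyset$, let $s = |S|$, let $R$ be an $s$-element subset of $V \setminus (T_1 \cup \cdots \cup T_{a-1})$, and set $T_1^* = (T_1 \setminus S) \cup R$ and $\mathcal{T}^* = \{T_1^*, T_2, \ldots, T_{a-1}\}$. Then the number of $r$-element subsets of $V$ that capture $\mathcal{T}$ is at most the number of $r$-element subsets of $V$ that capture $\mathcal{T}^*$. -/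

import Mathlib

/-!
Replacing `S` by `R` one point at a time, it suffices to swap a single point `x` of `T₁` for a
fresh point `u`. For that swap, the `r`-sets that capture the old family but not the new one are
injected into the `r`-sets that capture the new family but not the old one by
`E ↦ (E \ {x}) ∪ {u}`: such an `E` must contain `x`, avoid `u`, and capture the old family
through `T₁`, whose swapped copy its image then captures.
-/

open Finset Function

variable {α ι : Type*} [DecidableEq α]

def capturingSets [Fintype α] [Fintype ι] (r c : ℕ) (U : ι → Finset α) : Finset (Finset α) :=
  (powersetCard r univ).filter fun E => ∃ j, c ≤ #(E ∩ U j)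

lemma mem_capturingSets [Fintype α] [Fintype ι] {r c : ℕ} {U : ι → Finset α} {E : Finset α} :
    E ∈ capturingSets r c U ↔ #E = r ∧ ∃ j, c ≤ #(E ∩ U j) := by
  simp [capturingSets]

lemma card_le_card_insert_erase {s : Finset α} {u : α} (x : α) (hu : u ∉ s) :
    #s ≤ #(insert u (s.erase x)) := by
  rw [card_insert_of_notMem fun h => hu (mem_of_mem_erase h)]
  have := pred_card_le_card_erase (s := s) (a := x)
  omega

section Swap

variable [DecidableEq ι] {U : ι → Finset α} {j₀ : ι} {x u : α} {c : ℕ} {E : Finset α}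

lemma erase_inter_subset_inter_update :
    (E ∩ U j₀).erase x ⊆ E ∩ update U j₀ (insert u ((U j₀).erase x)) j₀ := by
  intro y
  simp only [mem_erase, mem_inter, update_self, mem_insert]
  tauto

lemma insert_erase_inter_subset_inter_update (hu : ∀ j, u ∉ U j) (j : ι) :
    insert u (E.erase x) ∩ U j ⊆ E ∩ update U j₀ (insert u ((U j₀).erase x)) j := by
  intro y hy
  obtain ⟨hyE, hyU⟩ := mem_inter.mp hy
  obtain rfl | hyE := mem_insert.mp hyE
  · exact absurd hyU (hu j)
  obtain ⟨hyx, hyE⟩ := mem_erase.mp hyE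
  refine mem_inter.mpr ⟨hyE, ?_⟩
  rcases eq_or_ne j j₀ with rfl | hj
  · simp [hyx, hyU]
  · simpa [hj] using hyU

lemma captures_of_captures_of_not_captures_update (hu : ∀ j, u ∉ U j)
    (hE : ∃ j, c ≤ #(E ∩ U j))
    (hE' : ∀ j, #(E ∩ update U j₀ (insert u ((U j₀).erase x)) j) < c) :
    c ≤ #(E ∩ U j₀) ∧ x ∈ E ∧ u ∉ E := by
  obtain ⟨j, hj⟩ := hE
  have hj₀ : j = j₀ := by
    by_contra hne
    have := hE' j
    rw [update_of_ne hne] at this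
    omega
  subst hj₀
  have hsub := erase_inter_subset_inter_update (E := E) (U := U) (j₀ := j) (x := x) (u := u)
  refine ⟨hj, ?_, ?_⟩
  · by_contra hxE
    rw [erase_eq_of_notMem fun h => hxE (mem_of_mem_inter_left h)] at hsub
    have := card_le_card hsub
    have := hE' j
    omega
  · intro huE
    have hins : insert u ((E ∩ U j).erase x) ⊆ E ∩ update U j (insert u ((U j).erase x)) j :=
      insert_subset (by simp [huE]) hsub
    have := card_le_card_insert_erase (s := E ∩ U j) x fun h => hu j (mem_of_mem_inter_right h)
    have := card_le_card hins
    have := hE' j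
    omega

theorem card_capturingSets_le_update_insert_erase [Fintype α] [Fintype ι] {r : ℕ}
    (hu : ∀ j, u ∉ U j) :
    #(capturingSets r c U) ≤
      #(capturingSets r c (update U j₀ (insert u ((U j₀).erase x)))) := by
  rw [← card_sdiff_le_card_sdiff_iff]
  refine card_le_card_of_injOn (fun E => insert u (E.erase x)) ?_ ?_
  · intro E hE
    simp only [coe_sdiff, Set.mem_sdiff, mem_coe, mem_capturingSets, not_and, not_exists,
      not_le] at hE ⊢
    obtain ⟨⟨hEr, hE⟩, hE'⟩ := hE
    obtain ⟨hcap, hxE, huE⟩ :=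
      captures_of_captures_of_not_captures_update hu hE (hE' hEr)
    have hcard : #(insert u (E.erase x)) = r := by
      rw [card_insert_of_notMem fun h => huE (mem_of_mem_erase h), card_erase_of_mem hxE, hEr]
      have := card_pos.mpr ⟨x, hxE⟩
      omega
    refine ⟨⟨hcard, j₀, ?_⟩, fun _ j => ?_⟩
    · have hins : insert u ((E ∩ U j₀).erase x) ⊆
          insert u (E.erase x) ∩ update U j₀ (insert u ((U j₀).erase x)) j₀ := by
        intro y
        simp only [mem_insert, mem_erase, mem_inter, update_self]
        tauto
      have := card_le_card_insert_erase (s := E ∩ U j₀) x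
        fun h => hu j₀ (mem_of_mem_inter_right h)
      have := card_le_card hins
      omega
    · have := card_le_card
        (insert_erase_inter_subset_inter_update (E := E) (j₀ := j₀) (x := x) hu j)
      have := hE' hEr j
      omega
  · intro E₁ hE₁ E₂ hE₂ heq
    simp only [coe_sdiff, Set.mem_sdiff, mem_coe, mem_capturingSets, not_and, not_exists,
      not_le] at hE₁ hE₂
    obtain ⟨-, hx₁, hu₁⟩ :=
      captures_of_captures_of_not_captures_update hu hE₁.1.2 (hE₁.2 hE₁.1.1)
    obtain ⟨-, hx₂, hu₂⟩ :=
      captures_of_captures_of_not_captures_update hu hE₂.1.2 (hE₂.2 hE₂.1.1)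
    have := congrArg (fun F => insert x (F.erase u)) heq
    simpa only [erase_insert fun h => hu₁ (mem_of_mem_erase h),
      erase_insert fun h => hu₂ (mem_of_mem_erase h), insert_erase hx₁, insert_erase hx₂]
      using this

theorem card_capturingSets_le_update_sdiff_union [Fintype α] [Fintype ι] {r : ℕ}
    {S R : Finset α} (hS : S ⊆ U j₀) (hR : #R = #S) (hRU : ∀ j, Disjoint R (U j)) :
    #(capturingSets r c U) ≤ #(capturingSets r c (update U j₀ ((U j₀ \ S) ∪ R))) := by
  induction S using Finset.induction_on generalizing R U with
  | empty =>
    rw [card_empty, card_eq_zero] at hR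
    simp [hR]
  | insert x S hxS ih =>
    obtain ⟨u, huR⟩ := card_pos.mp (by rw [hR, card_insert_of_notMem hxS]; omega)
    have hu : ∀ j, u ∉ U j := fun j => disjoint_left.mp (hRU j) huR
    have huS : u ∉ S := fun h => hu j₀ (hS (mem_insert_of_mem h))
    set U₁ := update U j₀ (insert u ((U j₀).erase x))
    have hS₁ : S ⊆ U₁ j₀ := fun y hy => by
      have hyx : y ≠ x := ne_of_mem_of_not_mem hy hxS
      simp [U₁, hyx, hS (mem_insert_of_mem hy)]
    have hR₁ : #(R.erase u) = #S := by
      rw [card_erase_of_mem huR, hR, card_insert_of_notMem hxS, Nat.add_sub_cancel]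
    have hRU₁ : ∀ j, Disjoint (R.erase u) (U₁ j) := by
      intro j
      rcases eq_or_ne j j₀ with rfl | hj
      · simp only [U₁, update_self, disjoint_insert_right, notMem_erase,
          not_false_eq_true, true_and]
        exact disjoint_of_subset_left (erase_subset _ _)
          (disjoint_of_subset_right (erase_subset _ _) (hRU j))
      · simpa [U₁, hj] using disjoint_of_subset_left (erase_subset _ _) (hRU j)
    have hU₁ :
        update U₁ j₀ ((U₁ j₀ \ S) ∪ R.erase u) = update U j₀ ((U j₀ \ insert x S) ∪ R) := by
      simp only [U₁, update_self, update_idem]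
      congr 1
      ext y
      by_cases hyu : y = u
      · subst hyu; simp [huS, huR]
      · simp only [mem_union, mem_sdiff, mem_insert, mem_erase, hyu, false_or, not_or]
        tauto
    calc #(capturingSets r c U) ≤ #(capturingSets r c U₁) :=
          card_capturingSets_le_update_insert_erase hu
      _ ≤ _ := ih hS₁ hR₁ hRU₁
      _ = _ := by rw [hU₁]

end Swap

/-- Replacing `T₁` by `T₁* = (T₁ \ S) ∪ R`, where `S = T₁ ∩ T₂ ≠ ∅` and `R`
is a fresh `|S|`-set, does not decrease the number of `r`-sets capturing the family. -/
theorem stmt_3 (n r k a i : ℕ) (ha : 3 ≤ a)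
    (T : Fin (a - 1) → Finset (Fin n))
    (S R : Finset (Fin n))
    (hS : S = T ⟨0, by omega⟩ ∩ T ⟨1, by omega⟩)
    (hR : R.card = S.card)
    (hRdisj : ∀ j, Disjoint R (T j))
    (Tstar : Fin (a - 1) → Finset (Fin n))
    (hTstar : Tstar = Function.update T ⟨0, by omega⟩ ((T ⟨0, by omega⟩ \ S) ∪ R)) :
    ((Finset.powersetCard r (Finset.univ : Finset (Fin n))).filter
        (fun E => ∃ j, k + i ≤ (E ∩ T j).card)).card ≤
      ((Finset.powersetCard r (Finset.univ : Finset (Fin n))).filter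
        (fun E => ∃ j, k + i ≤ (E ∩ Tstar j).card)).card := by
  subst hTstar
  have hS₀ : S ⊆ T ⟨0, by omega⟩ := hS ▸ inter_subset_left
  have h := card_capturingSets_le_update_sdiff_union (r := r) (c := k + i) hS₀ hR hRdisj
  unfold capturingSets at h
  -- the statement decides `∃ j : Fin _` by `Nat.decidableExistsFin`, not by `Fintype`
  convert h using 3
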